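/- Assume in addition that α_1 = α_i for some colour i ≠ 1. Then for every subset Δ ⊆ ℝ^d, E[(N_{Δ,1}(s) − N_{Δ,i}(s)) · 1_A] = E[|C_∞(E) ∩ Δ| · 1_A], where N_{Δ,j}(s) = #{x ∈ ω ∩ Δ : s(x) = j} is the number of points of ω in Δ with colour j. In particular, if P(A) > 0, the conditional expectation given A of N_{Δ,1} − N_{Δ,i} equals the conditional expectation given A of the number of points of Δ lying in the boundary cluster C_∞(E). -/

import Mathlib

open Finset
open scoped Classical

noncomputable section

namespace ContinuumPotts

/-- Points of `ℝ^d`. -/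
abbrev Pt (d : ℕ) := EuclideanSpace ℝ (Fin d)

variable {d : ℕ}

/-- The vertex type attached to a finite point configuration `ω`. -/
abbrev V (ω : Finset (Pt d)) := {x : Pt d // x ∈ ω}

/-- `P(ω)`: the set of unordered pairs of distinct points of `ω`, encoded as two-element
subsets of `ω`. -/
def pairs (ω : Finset (Pt d)) : Finset (Finset (V ω)) :=
  Finset.univ.powerset.filter fun e => e.card = 2

/-- The value `φ(x−y)` attached to a pair `e = {x,y}` (for even `φ`); computed
symmetrically so that no symmetry proof is needed in the definition. -/
def phiPair (φ : Pt d → ℝ) (ω : Finset (Pt d)) (e : Finset (V ω)) : ℝ :=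
  (∑ p ∈ e.offDiag, φ (p.1.1 - p.2.1)) / 2

/-- The probability `p_e = 1 − exp(−φ(x−y))` that the pair `e = {x,y}` is an edge. -/
def pe (φ : Pt d → ℝ) (ω : Finset (Pt d)) (e : Finset (V ω)) : ℝ :=
  1 - Real.exp (-(phiPair φ ω e))

/-- The probability that the random edge set is exactly `E`: each pair `e ∈ P(ω)` is present
independently with probability `p_e`. -/
def edgeWeight (φ : Pt d → ℝ) (ω : Finset (Pt d)) (E : Finset (Finset (V ω))) : ℝ :=
  (∏ e ∈ E, pe φ ω e) * ∏ e ∈ pairs ω \ E, (1 - pe φ ω e)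

/-- The probability that the random colouring is exactly `s`: points of the boundary set `B`
get the deterministic colour `1` (here `0 : Fin q`), the other points get i.i.d. colours of
law `α`. -/
def colourWeight {q : ℕ} (α : Fin q → ℝ) (c₁ : Fin q) (ω B : Finset (Pt d))
    (s : V ω → Fin q) : ℝ :=
  if ∀ x : V ω, x.1 ∈ B → s x = c₁ then
    ∏ x ∈ Finset.univ.filter fun x : V ω => x.1 ∉ B, α (s x)
  else 0

/-- The event `A`: every pair of points forming an edge of `E` has matching colours. -/
def Compat {q : ℕ} {ω : Finset (Pt d)} (s : V ω → Fin q) (E : Finset (Finset (V ω))) : Prop :=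
  ∀ e ∈ E, ∀ x ∈ e, ∀ y ∈ e, s x = s y

/-- The Hamiltonian `H^φ(s) = Σ_{{x,y} ⊆ ω, s(x) ≠ s(y)} φ(x−y)`. -/
def Hphi {q : ℕ} (φ : Pt d → ℝ) (ω : Finset (Pt d)) (s : V ω → Fin q) : ℝ :=
  ∑ e ∈ (pairs ω).filter fun e => ¬ ∀ x ∈ e, ∀ y ∈ e, s x = s y, phiPair φ ω e

/-- Two vertices are adjacent in the edge set `E` if they are distinct and the pair
`{x,y}` belongs to `E`. -/
def Adj {ω : Finset (Pt d)} (E : Finset (Finset (V ω))) (x y : V ω) : Prop :=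
  x ≠ y ∧ ({x, y} : Finset (V ω)) ∈ E

/-- The cluster (connected component of the graph `(ω, E)`) containing `x`. -/
def clusterOf {ω : Finset (Pt d)} (E : Finset (Finset (V ω))) (x : V ω) : Finset (V ω) :=
  Finset.univ.filter fun y => Relation.ReflTransGen (Adj E) x y

/-- `C_∞(E)`: the union of all clusters of `(ω, E)` intersecting the boundary set `B`. -/
def infCluster (B : Finset (Pt d)) {ω : Finset (Pt d)} (E : Finset (Finset (V ω))) :
    Finset (V ω) :=
  Finset.univ.filter fun x => ∃ y : V ω, y.1 ∈ B ∧ Relation.ReflTransGen (Adj E) x y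

/-- The finite clusters of `(ω, E)`: those connected components not intersecting `B`. -/
def finiteClusters (B : Finset (Pt d)) {ω : Finset (Pt d)} (E : Finset (Finset (V ω))) :
    Finset (Finset (V ω)) :=
  (Finset.univ.image (clusterOf E)).filter fun C => ∀ x ∈ C, x.1 ∉ B

/-- The generalized random-cluster weight
`w(E) = α₁^{|C_∞(E)|} · ∏_{C finite cluster} (Σᵢ αᵢ^{|C|}) · ∏_{e ∈ E} p_e ·
∏_{e ∈ P(ω)∖E} (1 − p_e)`. -/
def rcWeight {q : ℕ} (φ : Pt d → ℝ) (α : Fin q → ℝ) (c₁ : Fin q) (ω B : Finset (Pt d))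
    (E : Finset (Finset (V ω))) : ℝ :=
  α c₁ ^ (infCluster B E).card * (∏ C ∈ finiteClusters B E, ∑ i, α i ^ C.card) *
    edgeWeight φ ω E

end ContinuumPotts

namespace ContinuumPotts

section Aux

variable {d q : ℕ} {ω B : Finset (Pt d)} {E : Finset (Finset (V ω))}

lemma mem_infCluster_of_mem_B {x : V ω} (hx : x.1 ∈ B) : x ∈ infCluster B E := by
  simp only [infCluster, Finset.mem_filter, Finset.mem_univ, true_and]
  exact ⟨x, hx, Relation.ReflTransGen.refl⟩

lemma Adj.symm' {x y : V ω} (h : Adj E x y) : Adj E y x :=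
  ⟨h.1.symm, by rw [Finset.pair_comm]; exact h.2⟩

lemma mem_infCluster_of_adj {x y : V ω} (hxy : Adj E x y) (hy : y ∈ infCluster B E) :
    x ∈ infCluster B E := by
  simp only [infCluster, Finset.mem_filter, Finset.mem_univ, true_and] at hy ⊢
  obtain ⟨b, hb, hr⟩ := hy
  exact ⟨b, hb, Relation.ReflTransGen.head hxy hr⟩

lemma adj_of_mem_pair (hE : E ⊆ pairs ω) {e : Finset (V ω)} (he : e ∈ E) {x y : V ω}
    (hx : x ∈ e) (hy : y ∈ e) (hxy : x ≠ y) : Adj E x y := by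
  have hcard : e.card = 2 := by
    have h := hE he
    simp only [pairs, Finset.mem_filter] at h
    exact h.2
  have hsub : ({x, y} : Finset (V ω)) ⊆ e := by
    intro z hz
    rcases Finset.mem_insert.1 hz with h | h
    · exact h ▸ hx
    · exact (Finset.mem_singleton.1 h) ▸ hy
  have heq : ({x, y} : Finset (V ω)) = e :=
    Finset.eq_of_subset_of_card_le hsub (by simp [hcard, Finset.card_pair hxy])
  exact ⟨hxy, heq ▸ he⟩

/-- The involution on colourings: swap colours `c1` and `i` outside `C_∞(E)`. -/
def tau (B : Finset (Pt d)) (E : Finset (Finset (V ω))) (c1 i : Fin q)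
    (s : V ω → Fin q) : V ω → Fin q :=
  fun x => if x ∈ infCluster B E then s x else Equiv.swap c1 i (s x)

lemma tau_tau (c1 i : Fin q) (s : V ω → Fin q) : tau B E c1 i (tau B E c1 i s) = s := by
  funext x
  by_cases h : x ∈ infCluster B E <;> simp [tau, h]

lemma compat_tau (hE : E ⊆ pairs ω) (c1 i : Fin q) {s : V ω → Fin q} (hs : Compat s E) :
    Compat (tau B E c1 i s) E := by
  intro e he x hx y hy
  by_cases hxy : x = y
  · rw [hxy]
  have hadj := adj_of_mem_pair hE he hx hy hxy
  have hmem : x ∈ infCluster B E ↔ y ∈ infCluster B E :=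
    ⟨fun h => mem_infCluster_of_adj (Adj.symm' hadj) h, fun h => mem_infCluster_of_adj hadj h⟩
  have hsxy := hs e he x hx y hy
  by_cases h : x ∈ infCluster B E
  · simp [tau, h, hmem.1 h, hsxy]
  · have hy' : y ∉ infCluster B E := fun hy' => h (hmem.2 hy')
    simp [tau, h, hy', hsxy]

lemma alpha_swap {α : Fin q → ℝ} {c1 i : Fin q} (hαi : α i = α c1) (j : Fin q) :
    α (Equiv.swap c1 i j) = α j := by
  rcases eq_or_ne j c1 with rfl | h1
  · simp [Equiv.swap_apply_left, hαi]
  rcases eq_or_ne j i with rfl | h2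
  · simp [Equiv.swap_apply_right, hαi]
  · rw [Equiv.swap_apply_of_ne_of_ne h1 h2]

lemma colourWeight_tau (α : Fin q → ℝ) (c1 i : Fin q) (hαi : α i = α c1) (s : V ω → Fin q) :
    colourWeight α c1 ω B (tau B E c1 i s) = colourWeight α c1 ω B s := by
  unfold colourWeight
  have hb : ∀ x : V ω, x.1 ∈ B → tau B E c1 i s x = s x := fun x hx => by
    simp [tau, mem_infCluster_of_mem_B hx]
  have hcond : (∀ x : V ω, x.1 ∈ B → tau B E c1 i s x = c1) ↔
      (∀ x : V ω, x.1 ∈ B → s x = c1) :=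
    ⟨fun h x hx => (hb x hx) ▸ h x hx, fun h x hx => (hb x hx).trans (h x hx)⟩
  by_cases h : ∀ x : V ω, x.1 ∈ B → s x = c1
  · rw [if_pos (hcond.2 h), if_pos h]
    refine Finset.prod_congr rfl fun x _ => ?_
    by_cases hc : x ∈ infCluster B E
    · simp [tau, hc]
    · simp [tau, hc, alpha_swap hαi]
  · rw [if_neg (fun h' => h (hcond.1 h')), if_neg h]

lemma eq_c1_on_infCluster {c1 : Fin q} {s : V ω → Fin q} (hs : Compat s E)
    (hB1 : ∀ x : V ω, x.1 ∈ B → s x = c1) {x : V ω} (hx : x ∈ infCluster B E) :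
    s x = c1 := by
  simp only [infCluster, Finset.mem_filter, Finset.mem_univ, true_and] at hx
  obtain ⟨b, hb, hr⟩ := hx
  have hsb : ∀ {y z : V ω}, Relation.ReflTransGen (Adj E) y z → s y = s z := by
    intro y z hr
    induction hr with
    | refl => rfl
    | tail hab hbc ih =>
        exact ih.trans (hs _ hbc.2 _ (Finset.mem_insert_self _ _) _ (by simp))
  exact (hsb hr).trans (hB1 b hb)

lemma key (φ : Pt d → ℝ) (α : Fin q → ℝ) (c1 i : Fin q) (hi : i ≠ c1) (hαi : α i = α c1)
    (hE : E ⊆ pairs ω) (Δ : Set (Pt d)) :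
    (∑ s : V ω → Fin q, (if Compat s E then
        (((Finset.univ.filter fun x : V ω => x.1 ∈ Δ ∧ s x = c1).card : ℝ) -
          ((Finset.univ.filter fun x : V ω => x.1 ∈ Δ ∧ s x = i).card : ℝ)) *
          (colourWeight α c1 ω B s * edgeWeight φ ω E) else 0))
    = ∑ s : V ω → Fin q, (if Compat s E then
        (((infCluster B E).filter fun x : V ω => x.1 ∈ Δ).card : ℝ) *
          (colourWeight α c1 ω B s * edgeWeight φ ω E) else 0) := by
  classical
  set g : (V ω → Fin q) → ℝ := fun s =>
    if Compat s E then
      (((Finset.univ.filter fun x : V ω =>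
            x ∉ infCluster B E ∧ x.1 ∈ Δ ∧ s x = c1).card : ℝ) -
        ((Finset.univ.filter fun x : V ω =>
            x ∉ infCluster B E ∧ x.1 ∈ Δ ∧ s x = i).card : ℝ)) *
        (colourWeight α c1 ω B s * edgeWeight φ ω E)
    else 0 with hg
  have hstep : ∀ s : V ω → Fin q,
      (if Compat s E then
        (((Finset.univ.filter fun x : V ω => x.1 ∈ Δ ∧ s x = c1).card : ℝ) -
          ((Finset.univ.filter fun x : V ω => x.1 ∈ Δ ∧ s x = i).card : ℝ)) *
          (colourWeight α c1 ω B s * edgeWeight φ ω E) else 0)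
      = (if Compat s E then
          (((infCluster B E).filter fun x : V ω => x.1 ∈ Δ).card : ℝ) *
            (colourWeight α c1 ω B s * edgeWeight φ ω E) else 0) + g s := by
    intro s
    by_cases hcs : Compat s E
    · simp only [hg, if_pos hcs]
      by_cases hB1 : ∀ x : V ω, x.1 ∈ B → s x = c1
      · have hN1 : (Finset.univ.filter fun x : V ω => x.1 ∈ Δ ∧ s x = c1)
            = ((infCluster B E).filter fun x : V ω => x.1 ∈ Δ) ∪
              (Finset.univ.filter fun x : V ω =>
                x ∉ infCluster B E ∧ x.1 ∈ Δ ∧ s x = c1) := by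
          ext x
          simp only [Finset.mem_filter, Finset.mem_union, Finset.mem_univ, true_and]
          constructor
          · rintro ⟨hΔ, hc⟩
            by_cases h : x ∈ infCluster B E
            · exact Or.inl ⟨h, hΔ⟩
            · exact Or.inr ⟨h, hΔ, hc⟩
          · rintro (⟨h, hΔ⟩ | ⟨h, hΔ, hc⟩)
            · exact ⟨hΔ, eq_c1_on_infCluster hcs hB1 h⟩
            · exact ⟨hΔ, hc⟩
        have hdisj : Disjoint ((infCluster B E).filter fun x : V ω => x.1 ∈ Δ)
            (Finset.univ.filter fun x : V ω =>
              x ∉ infCluster B E ∧ x.1 ∈ Δ ∧ s x = c1) := by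
          rw [Finset.disjoint_left]
          intro x hx1 hx2
          exact (Finset.mem_filter.1 hx2).2.1 (Finset.mem_filter.1 hx1).1
        have hNi : (Finset.univ.filter fun x : V ω => x.1 ∈ Δ ∧ s x = i)
            = (Finset.univ.filter fun x : V ω =>
                x ∉ infCluster B E ∧ x.1 ∈ Δ ∧ s x = i) := by
          ext x
          simp only [Finset.mem_filter, Finset.mem_univ, true_and]
          refine ⟨fun ⟨hΔ, hc⟩ => ⟨fun h => hi ?_, hΔ, hc⟩, fun ⟨_, hΔ, hc⟩ => ⟨hΔ, hc⟩⟩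
          rw [← hc]; exact (eq_c1_on_infCluster hcs hB1 h)
        rw [hN1, Finset.card_union_of_disjoint hdisj, hNi]
        push_cast
        ring
      · have hcw : colourWeight α c1 ω B s = 0 := by
          unfold colourWeight; rw [if_neg hB1]
        rw [hcw]
        ring
    · simp [hg, if_neg hcs]
  have hzero : ∑ s : V ω → Fin q, g s = 0 := by
    have hinv : Function.Involutive (tau B E c1 i) := fun s => tau_tau c1 i s
    have hneg : ∀ s : V ω → Fin q, g (tau B E c1 i s) = - g s := by
      intro s
      have hcompat : Compat (tau B E c1 i s) E ↔ Compat s E := by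
        constructor
        · intro h
          have := compat_tau (B := B) hE c1 i h
          rwa [tau_tau] at this
        · exact compat_tau (B := B) hE c1 i
      have hBc1 : (Finset.univ.filter fun x : V ω =>
            x ∉ infCluster B E ∧ x.1 ∈ Δ ∧ tau B E c1 i s x = c1)
          = (Finset.univ.filter fun x : V ω =>
            x ∉ infCluster B E ∧ x.1 ∈ Δ ∧ s x = i) := by
        refine Finset.filter_congr fun x _ => ?_
        constructor
        · rintro ⟨h, hΔ, hc⟩
          refine ⟨h, hΔ, ?_⟩
          have : Equiv.swap c1 i (s x) = Equiv.swap c1 i i := by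
            rw [Equiv.swap_apply_right]
            simpa [tau, h] using hc
          exact (Equiv.swap c1 i).injective this
        · rintro ⟨h, hΔ, hc⟩
          exact ⟨h, hΔ, by simp [tau, h, hc, Equiv.swap_apply_right]⟩
      have hBci : (Finset.univ.filter fun x : V ω =>
            x ∉ infCluster B E ∧ x.1 ∈ Δ ∧ tau B E c1 i s x = i)
          = (Finset.univ.filter fun x : V ω =>
            x ∉ infCluster B E ∧ x.1 ∈ Δ ∧ s x = c1) := by
        refine Finset.filter_congr fun x _ => ?_
        constructor
        · rintro ⟨h, hΔ, hc⟩
          refine ⟨h, hΔ, ?_⟩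
          have : Equiv.swap c1 i (s x) = Equiv.swap c1 i c1 := by
            rw [Equiv.swap_apply_left]
            simpa [tau, h] using hc
          exact (Equiv.swap c1 i).injective this
        · rintro ⟨h, hΔ, hc⟩
          exact ⟨h, hΔ, by simp [tau, h, hc, Equiv.swap_apply_left]⟩
      by_cases hcs : Compat s E
      · simp only [hg, if_pos (hcompat.2 hcs), if_pos hcs, hBc1, hBci,
          colourWeight_tau α c1 i hαi s]
        ring
      · simp [hg, if_neg hcs, if_neg (fun h => hcs (hcompat.1 h))]
    have hsum : ∑ s : V ω → Fin q, g (tau B E c1 i s) = ∑ s : V ω → Fin q, g s :=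
      Function.Bijective.sum_comp hinv.bijective g
    have : ∑ s : V ω → Fin q, g s = - ∑ s : V ω → Fin q, g s :=
      calc ∑ s : V ω → Fin q, g s = ∑ s : V ω → Fin q, g (tau B E c1 i s) := hsum.symm
        _ = ∑ s : V ω → Fin q, - g s := Finset.sum_congr rfl fun s _ => hneg s
        _ = - ∑ s : V ω → Fin q, g s := Finset.sum_neg_distrib _
    linarith
  calc (∑ s : V ω → Fin q, (if Compat s E then
        (((Finset.univ.filter fun x : V ω => x.1 ∈ Δ ∧ s x = c1).card : ℝ) -
          ((Finset.univ.filter fun x : V ω => x.1 ∈ Δ ∧ s x = i).card : ℝ)) *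
          (colourWeight α c1 ω B s * edgeWeight φ ω E) else 0))
      = ∑ s : V ω → Fin q, ((if Compat s E then
          (((infCluster B E).filter fun x : V ω => x.1 ∈ Δ).card : ℝ) *
            (colourWeight α c1 ω B s * edgeWeight φ ω E) else 0) + g s) :=
        Finset.sum_congr rfl fun s _ => hstep s
    _ = (∑ s : V ω → Fin q, (if Compat s E then
          (((infCluster B E).filter fun x : V ω => x.1 ∈ Δ).card : ℝ) *
            (colourWeight α c1 ω B s * edgeWeight φ ω E) else 0))
        + ∑ s : V ω → Fin q, g s := Finset.sum_add_distrib
    _ = _ := by rw [hzero, add_zero]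

end Aux

/-- Assume colour `i ≠ 1` also has maximal proportion (`α_i = α_1`). Then for
every region `Δ ⊆ ℝ^d`, `E[(N_{Δ,1} − N_{Δ,i}) 1_A] = E[|C_∞(E) ∩ Δ| 1_A]`; in particular, if
`P(A) > 0`, the conditional expectations given `A` coincide. -/
theorem colour_difference_eq_infCluster (d q : ℕ) (hd : 1 ≤ d) (hq : 2 ≤ q)
    (ω B : Finset (Pt d)) (hB : B ⊆ ω) (φ : Pt d → ℝ)
    (hφeven : ∀ z, φ (-z) = φ z) (hφpos : ∀ z, 0 ≤ φ z)
    (α : Fin q → ℝ) (hαpos : ∀ i, 0 < α i) (hαsum : ∑ i, α i = 1)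
    (i : Fin q) (hi : i ≠ (⟨0, by omega⟩ : Fin q)) (hαi : α i = α (⟨0, by omega⟩ : Fin q)) :
    ∀ Δ : Set (Pt d),
      (∑ s : V ω → Fin q, ∑ E ∈ (pairs ω).powerset,
          if Compat s E then
            (((Finset.univ.filter fun x : V ω =>
                  x.1 ∈ Δ ∧ s x = (⟨0, by omega⟩ : Fin q)).card : ℝ) -
              ((Finset.univ.filter fun x : V ω => x.1 ∈ Δ ∧ s x = i).card : ℝ)) *
              (colourWeight α (⟨0, by omega⟩ : Fin q) ω B s * edgeWeight φ ω E)
          else 0)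
        = (∑ s : V ω → Fin q, ∑ E ∈ (pairs ω).powerset,
            if Compat s E then
              (((infCluster B E).filter fun x : V ω => x.1 ∈ Δ).card : ℝ) *
                (colourWeight α (⟨0, by omega⟩ : Fin q) ω B s * edgeWeight φ ω E)
            else 0) ∧
      ((0 < ∑ s : V ω → Fin q, ∑ E ∈ (pairs ω).powerset,
            if Compat s E then
              colourWeight α (⟨0, by omega⟩ : Fin q) ω B s * edgeWeight φ ω E
            else 0) →
        (∑ s : V ω → Fin q, ∑ E ∈ (pairs ω).powerset,
            if Compat s E then
              (((Finset.univ.filter fun x : V ω =>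
                    x.1 ∈ Δ ∧ s x = (⟨0, by omega⟩ : Fin q)).card : ℝ) -
                ((Finset.univ.filter fun x : V ω => x.1 ∈ Δ ∧ s x = i).card : ℝ)) *
                (colourWeight α (⟨0, by omega⟩ : Fin q) ω B s * edgeWeight φ ω E)
            else 0) /
          (∑ s : V ω → Fin q, ∑ E ∈ (pairs ω).powerset,
            if Compat s E then
              colourWeight α (⟨0, by omega⟩ : Fin q) ω B s * edgeWeight φ ω E
            else 0)
        = (∑ s : V ω → Fin q, ∑ E ∈ (pairs ω).powerset,
            if Compat s E then
              (((infCluster B E).filter fun x : V ω => x.1 ∈ Δ).card : ℝ) *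
                (colourWeight α (⟨0, by omega⟩ : Fin q) ω B s * edgeWeight φ ω E)
            else 0) /
          (∑ s : V ω → Fin q, ∑ E ∈ (pairs ω).powerset,
            if Compat s E then
              colourWeight α (⟨0, by omega⟩ : Fin q) ω B s * edgeWeight φ ω E
            else 0)) := by
  intro Δ
  have hmain :
      (∑ s : V ω → Fin q, ∑ E ∈ (pairs ω).powerset,
          if Compat s E then
            (((Finset.univ.filter fun x : V ω =>
                  x.1 ∈ Δ ∧ s x = (⟨0, by omega⟩ : Fin q)).card : ℝ) -
              ((Finset.univ.filter fun x : V ω => x.1 ∈ Δ ∧ s x = i).card : ℝ)) *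
              (colourWeight α (⟨0, by omega⟩ : Fin q) ω B s * edgeWeight φ ω E)
          else 0)
        = (∑ s : V ω → Fin q, ∑ E ∈ (pairs ω).powerset,
            if Compat s E then
              (((infCluster B E).filter fun x : V ω => x.1 ∈ Δ).card : ℝ) *
                (colourWeight α (⟨0, by omega⟩ : Fin q) ω B s * edgeWeight φ ω E)
            else 0) := by
    rw [Finset.sum_comm, Finset.sum_comm (s := Finset.univ)]
    refine Finset.sum_congr rfl fun E hEmem => ?_
    exact key φ α (⟨0, by omega⟩ : Fin q) i hi hαi (Finset.mem_powerset.1 hEmem) Δ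
  exact ⟨hmain, fun _ => by rw [hmain]⟩

end ContinuumPotts
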